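/- For m ∈ Y^β with m_i = m_{i+1}, the KLR relations imply the divided-difference (Demazure) identity: τ_i f(z_i, z_{i+1}) e(m) - f(z_{i+1}, z_i) τ_i e(m) = ∂_i(f)(z_i,z_{i+1}) e(m) for any polynomial f in two variables, where ∂_i(f)(u,v) = (f(v,u) - f(u,v))/(u-v); in particular for symmetric polynomials f, τ_i commutes with f(z_i, z_{i+1}) on e(m). -/

import Mathlib

/-!
Put `T = τ e`. Since `e` commutes with `z₁, z₂`, relation (6) reads `T z₁ = z₂ T - e`,
`T z₂ = z₁ T + e`, and `τ f(z₁, z₂) e = T f(z₁, z₂)`. The map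
`D f = T f(z₁, z₂) - f(z₂, z₁) T` is a twisted derivation, `D (f h) = D f · h + f^s · D h`
(evaluations at `(z₁, z₂)`, `f^s = f(v, u)`), and the divided difference obeys the same rule
`∂ (f h) = ∂f · h + f^s · ∂h`. As `D` and `(∂ ·) e` agree on constants and on `u, v`, they
agree on all of `ℂ[u, v]`; `∂f` is unique because `ℂ[u, v]` is a domain.
-/

open MvPolynomial

/-- Evaluation of a two-variable polynomial `f ∈ ℂ[u,v]` at a pair of elements of a
(noncommutative) `ℂ`-algebra: `u ↦ a`, `v ↦ b`. -/
noncomputable def ev2 {R : Type*} [Ring R] [Algebra ℂ R] (a b : R)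
    (f : MvPolynomial (Fin 2) ℂ) : R :=
  (AddMonoidAlgebra.coeff f).sum fun s c => algebraMap ℂ R c * a ^ (s 0) * b ^ (s 1)

section Evaluation

variable {A : Type*} [Ring A] [Algebra ℂ A] {a b : A}

theorem Commute.isMulCommutative_adjoin_pair (hab : Commute a b) :
    IsMulCommutative (Algebra.adjoin ℂ {a, b}) :=
  Algebra.isMulCommutative_adjoin ℂ <| by
    rintro x (rfl | rfl) y (rfl | rfl) <;> first | rfl | exact hab | exact hab.symm

open scoped IsMulCommutative

noncomputable def ev2AlgHom (hab : Commute a b) : MvPolynomial (Fin 2) ℂ →ₐ[ℂ] A :=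
  haveI := hab.isMulCommutative_adjoin_pair
  (Algebra.adjoin ℂ {a, b}).val.comp
    (aeval ![⟨a, Algebra.subset_adjoin (by simp)⟩, ⟨b, Algebra.subset_adjoin (by simp)⟩])

theorem ev2AlgHom_apply (hab : Commute a b) (f : MvPolynomial (Fin 2) ℂ) :
    ev2AlgHom hab f = ev2 a b f := by
  have := hab.isMulCommutative_adjoin_pair
  rw [ev2AlgHom, AlgHom.comp_apply, aeval_def, eval₂, map_finsuppSum]
  simp [ev2, Finsupp.prod_fintype, Fin.prod_univ_two, mul_assoc]

theorem ev2_zero : ev2 a b 0 = 0 := by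
  simp [ev2]

theorem ev2AlgHom_X_zero (hab : Commute a b) : ev2AlgHom hab (X 0) = a := by
  simp [ev2AlgHom_apply, ev2, X]

theorem ev2AlgHom_X_one (hab : Commute a b) : ev2AlgHom hab (X 1) = b := by
  simp [ev2AlgHom_apply, ev2, X]

theorem ev2AlgHom_comp_rename_swap (hab : Commute a b) :
    (ev2AlgHom hab).comp (rename (Equiv.swap 0 1)) = ev2AlgHom hab.symm := by
  ext i
  fin_cases i <;> simp [ev2AlgHom_X_zero, ev2AlgHom_X_one]

theorem ev2_rename_swap (hab : Commute a b) (f : MvPolynomial (Fin 2) ℂ) :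
    ev2 a b (rename (Equiv.swap 0 1) f) = ev2 b a f := by
  rw [← ev2AlgHom_apply hab, ← ev2AlgHom_apply hab.symm, ← ev2AlgHom_comp_rename_swap hab,
    AlgHom.comp_apply]

theorem commute_ev2 (hab : Commute a b) {x : A} (ha : Commute a x) (hb : Commute b x)
    (f : MvPolynomial (Fin 2) ℂ) : Commute (ev2 a b f) x := by
  rw [← ev2AlgHom_apply hab]
  induction f using MvPolynomial.induction_on with
  | C c => exact (AlgHom.commutes (ev2AlgHom hab) c).symm ▸ Algebra.commutes c x
  | add p q hp hq => exact (map_add (ev2AlgHom hab) p q).symm ▸ hp.add_left hq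
  | mul_X p n hp =>
    rw [map_mul]
    exact hp.mul_left (by fin_cases n <;> simpa [ev2AlgHom_X_zero, ev2AlgHom_X_one])

end Evaluation

section DividedDifference

variable {R : Type*} [CommRing R] {f g h gf gh : MvPolynomial (Fin 2) R}

/-- `g` is the divided difference `∂f = (f(v,u) - f(u,v)) / (u - v)` of `f(u,v)`. -/
def IsDivDiff (f g : MvPolynomial (Fin 2) R) : Prop :=
  (X 0 - X 1) * g = rename (Equiv.swap 0 1) f - f

theorem isDivDiff_C (c : R) : IsDivDiff (C c) 0 := by
  simp [IsDivDiff]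

theorem isDivDiff_X_zero : IsDivDiff (X 0 : MvPolynomial (Fin 2) R) (-1) := by
  simp [IsDivDiff]

theorem isDivDiff_X_one : IsDivDiff (X 1 : MvPolynomial (Fin 2) R) 1 := by
  simp [IsDivDiff]

theorem IsDivDiff.add (hf : IsDivDiff f gf) (hh : IsDivDiff h gh) :
    IsDivDiff (f + h) (gf + gh) := by
  unfold IsDivDiff at *
  rw [map_add]
  linear_combination hf + hh

theorem IsDivDiff.mul (hf : IsDivDiff f gf) (hh : IsDivDiff h gh) :
    IsDivDiff (f * h) (gf * h + rename (Equiv.swap 0 1) f * gh) := by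
  unfold IsDivDiff at *
  rw [map_mul]
  linear_combination h * hf + rename (Equiv.swap 0 1) f * hh

theorem IsDivDiff.unique [IsDomain R] (hg : IsDivDiff f g) (hg' : IsDivDiff f gf) : g = gf :=
  mul_left_cancel₀ (sub_ne_zero.2 (X_injective.ne (by decide))) (hg.trans hg'.symm)

end DividedDifference

section Demazure

variable {A : Type*} [Ring A] [Algebra ℂ A] {T z₁ z₂ e : A}

theorem exists_isDivDiff_and_mul_ev2_sub_ev2_mul (hz : Commute z₁ z₂) (he₁ : Commute z₁ e)
    (he₂ : Commute z₂ e) (hT₁ : T * z₁ = z₂ * T - e) (hT₂ : T * z₂ = z₁ * T + e)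
    (f : MvPolynomial (Fin 2) ℂ) :
    ∃ g, IsDivDiff f g ∧ T * ev2 z₁ z₂ f - ev2 z₂ z₁ f * T = ev2 z₁ z₂ g * e := by
  simp only [← ev2AlgHom_apply hz, ← ev2AlgHom_apply hz.symm]
  set φ := ev2AlgHom hz
  set ψ := ev2AlgHom hz.symm
  have hψ (p : MvPolynomial (Fin 2) ℂ) : ψ p = φ (rename (Equiv.swap 0 1) p) := by
    rw [← AlgHom.comp_apply, ev2AlgHom_comp_rename_swap]
  have he (p : MvPolynomial (Fin 2) ℂ) : Commute (φ p) e :=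
    (ev2AlgHom_apply hz p).symm ▸ commute_ev2 hz he₁ he₂ p
  have leibniz (p q : MvPolynomial (Fin 2) ℂ) :
      T * φ (p * q) - ψ (p * q) * T = (T * φ p - ψ p * T) * φ q + ψ p * (T * φ q - ψ q * T) := by
    simp only [map_mul]
    noncomm_ring
  induction f using MvPolynomial.induction_on with
  | C c => exact ⟨0, isDivDiff_C c, by simp [Algebra.commutes]⟩
  | add p q hp hq =>
    obtain ⟨gp, hgp, hp⟩ := hp
    obtain ⟨gq, hgq, hq⟩ := hq
    refine ⟨gp + gq, hgp.add hgq, ?_⟩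
    simp only [map_add, add_mul, mul_add, ← hp, ← hq]
    abel
  | mul_X p n hp =>
    obtain ⟨g, hg, hp⟩ := hp
    obtain ⟨d, hd, hX⟩ : ∃ d, IsDivDiff (X n) d ∧ T * φ (X n) - ψ (X n) * T = φ d * e := by
      fin_cases n
      · exact ⟨-1, isDivDiff_X_zero, by simp [φ, ψ, ev2AlgHom_X_zero, hT₁]⟩
      · exact ⟨1, isDivDiff_X_one, by simp [φ, ψ, ev2AlgHom_X_one, hT₂]⟩
    refine ⟨g * X n + rename (Equiv.swap 0 1) p * d, hg.mul hd, ?_⟩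
    rw [leibniz, hp, hX, hψ, map_add, map_mul, map_mul, add_mul, mul_assoc (φ g),
      ← (he (X n)).eq]
    simp only [mul_assoc]

theorem mul_ev2_sub_ev2_mul_of_isDivDiff (hz : Commute z₁ z₂) (he₁ : Commute z₁ e)
    (he₂ : Commute z₂ e) (hT₁ : T * z₁ = z₂ * T - e) (hT₂ : T * z₂ = z₁ * T + e)
    {f g : MvPolynomial (Fin 2) ℂ} (hfg : IsDivDiff f g) :
    T * ev2 z₁ z₂ f - ev2 z₂ z₁ f * T = ev2 z₁ z₂ g * e := by
  obtain ⟨g', hg', h⟩ := exists_isDivDiff_and_mul_ev2_sub_ev2_mul hz he₁ he₂ hT₁ hT₂ f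
  rwa [hfg.unique hg']

end Demazure

/-- The divided-difference (Demazure) identity in the KLR algebra for `m_i = m_{i+1}`:
with `τ = τ_i`, `z₁ = z_i`, `z₂ = z_{i+1}`, `e = e(m)` and relation (6)
(`τ z_i e = z_{i+1} τ e - e`, `τ z_{i+1} e = z_i τ e + e`), for any polynomial `f(u,v)`
and any `g` with `(u - v) g = f(v,u) - f(u,v)` (i.e. `g = ∂_i f`), one has
`τ f(z_i, z_{i+1}) e - f(z_{i+1}, z_i) τ e = (∂_i f)(z_i, z_{i+1}) e`; in particular
`τ_i` commutes with `f(z_i, z_{i+1})` on `e(m)` for symmetric `f`. -/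
theorem demazure_identity {R : Type*} [Ring R] [Algebra ℂ R] (τ z₁ z₂ e : R)
    (hzz : z₁ * z₂ = z₂ * z₁) (hz₁e : z₁ * e = e * z₁) (hz₂e : z₂ * e = e * z₂)
    (h1 : τ * (z₁ * e) = z₂ * (τ * e) - e)
    (h2 : τ * (z₂ * e) = z₁ * (τ * e) + e) :
    (∀ f g : MvPolynomial (Fin 2) ℂ,
      (X 0 - X 1 : MvPolynomial (Fin 2) ℂ) * g =
        rename (Equiv.swap (0 : Fin 2) 1) f - f →
      τ * (ev2 z₁ z₂ f * e) - ev2 z₂ z₁ f * (τ * e) = ev2 z₁ z₂ g * e) ∧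
    (∀ f : MvPolynomial (Fin 2) ℂ,
      rename (Equiv.swap (0 : Fin 2) 1) f = f →
      τ * (ev2 z₁ z₂ f * e) = ev2 z₁ z₂ f * (τ * e)) := by
  have hτe (p : MvPolynomial (Fin 2) ℂ) : τ * (ev2 z₁ z₂ p * e) = τ * e * ev2 z₁ z₂ p := by
    rw [mul_assoc, (commute_ev2 hzz hz₁e hz₂e p).eq]
  have hT₁ : τ * e * z₁ = z₂ * (τ * e) - e := by rw [mul_assoc, ← hz₁e, h1]
  have hT₂ : τ * e * z₂ = z₁ * (τ * e) + e := by rw [mul_assoc, ← hz₂e, h2]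
  have demazure (f g : MvPolynomial (Fin 2) ℂ) (hfg : IsDivDiff f g) :
      τ * (ev2 z₁ z₂ f * e) - ev2 z₂ z₁ f * (τ * e) = ev2 z₁ z₂ g * e := by
    rw [hτe]
    exact mul_ev2_sub_ev2_mul_of_isDivDiff hzz hz₁e hz₂e hT₁ hT₂ hfg
  refine ⟨demazure, fun f hf => ?_⟩
  have hsymm := demazure f 0 (by simp [IsDivDiff, hf])
  rwa [← ev2_rename_swap hzz, hf, ev2_zero, zero_mul, sub_eq_zero] at hsymm
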